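/- In the nodal pipe-and-bubble model, suppose bus v is a leaf: there is a bus w ≠ v with U (v, u) = 0 for every u ∉ {v, w} (so v is incident to a single radial line (v,w)). Then every feasible point (g, s, f) satisfies f (w, v) = d v − g v − s v; in particular the flow on a radial line is uniquely determined by the injections at the leaf bus. Moreover, if U (v, w) ≥ max (d v, ḡ v), then the capacity constraint |f (v, w)| ≤ U (v, w) is implied by the remaining constraints, and the model obtained by merging v into w (the aggregation induced by the quotient map identifying v with w and fixing all other buses) has the same optimal value as the nodal model. -/

import Mathlib

/-!
At a leaf `v` every line other than `(v, w)` has capacity zero, so the balance at `v` forces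
`f (w, v) = d v - g v - s v`. Since `-d v ≤ g v + s v - d v ≤ gbar v`, the capacity of `(v, w)`
cannot bind once it is at least `max (d v) (gbar v)`.

For the merge, summing a nodal flow over pairs of zones gives a feasible zonal flow (flows inside
a zone cancel by antisymmetry). Conversely, a zonal flow of the merged model lifts to a nodal one
that carries the net injection of `v` on the line `(v, w)`: the zonal capacities of the merged
model are exactly the nodal ones because `v` has no other line. Both maps keep `g` and `s`, hence
the cost, so the two sets of feasible costs coincide.
-/

open Finset

theorem sum_sum_eq_zero_of_antisymm {ι : Type*} [Fintype ι] {h : ι → ι → ℝ}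
    (hh : ∀ a b, h a b = -h b a) : ∑ a, ∑ b, h a b = 0 := by
  have hswap : ∑ a, ∑ b, h a b = -∑ a, ∑ b, h a b := calc
    ∑ a, ∑ b, h a b = ∑ b, ∑ a, h a b := sum_comm
    _ = ∑ b, ∑ a, -h b a := sum_congr rfl fun b _ => sum_congr rfl fun a _ => hh a b
    _ = -∑ a, ∑ b, h a b := by simp only [sum_neg_distrib]
  linarith

theorem abs_add_sub_le_of_max_le {g s d gbar c : ℝ} (hg : 0 ≤ g ∧ g ≤ gbar)
    (hs : 0 ≤ s ∧ s ≤ d) (hc : max d gbar ≤ c) : |g + s - d| ≤ c := by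
  rw [max_le_iff] at hc
  rw [abs_le]
  constructor <;> linarith [hg.1, hg.2, hs.1, hs.2]

section Aggregation

variable {V W : Type*} [Fintype V] [DecidableEq W]

/-- `aggregate q U` is the zonal capacity `Ũ` of the paper, `aggregate q f` the zonal flow
induced by a nodal flow `f`. -/
def aggregate (q : V → W) (h : V × V → ℝ) : W × W → ℝ := fun zz =>
  if zz.1 = zz.2 then 0 else ∑ a, ∑ b, if q a = zz.1 ∧ q b = zz.2 then h (a, b) else 0

variable (q : V → W) {f : V × V → ℝ}

theorem aggregate_antisymm (hf : ∀ a b, f (a, b) = -f (b, a)) (z z' : W) :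
    aggregate q f (z, z') = -aggregate q f (z', z) := by
  unfold aggregate
  by_cases hz : z = z'
  · simp [hz]
  rw [if_neg hz, if_neg (Ne.symm hz), sum_comm, ← sum_neg_distrib]
  refine sum_congr rfl fun b _ => ?_
  rw [← sum_neg_distrib]
  refine sum_congr rfl fun a _ => ?_
  rw [hf a b]
  split_ifs <;> first | (exfalso; tauto) | simp

theorem abs_aggregate_le {U : V × V → ℝ} (hf : ∀ a b, |f (a, b)| ≤ U (a, b)) (z z' : W) :
    |aggregate q f (z, z')| ≤ aggregate q U (z, z') := by
  unfold aggregate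
  split_ifs
  · simp
  refine (abs_sum_le_sum_abs _ _).trans (sum_le_sum fun a _ => ?_)
  refine (abs_sum_le_sum_abs _ _).trans (sum_le_sum fun b _ => ?_)
  split_ifs <;> simp [hf a b]

theorem aggregate_eq_sum_sum (hf : ∀ a b, f (a, b) = -f (b, a)) (z z' : W) :
    aggregate q f (z, z') = ∑ a, ∑ b, if q a = z ∧ q b = z' then f (a, b) else 0 := by
  unfold aggregate
  dsimp only
  split_ifs with hz
  · subst hz
    refine (sum_sum_eq_zero_of_antisymm fun a b => ?_).symm
    rw [hf a b]
    split_ifs <;> first | (exfalso; tauto) | simp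
  · rfl

variable [Fintype W]

theorem sum_aggregate_inflow (hf : ∀ a b, f (a, b) = -f (b, a)) (z : W) :
    ∑ z', aggregate q f (z', z) = ∑ b, if q b = z then ∑ a, f (a, b) else 0 := by
  simp only [aggregate_eq_sum_sum q hf, ite_and, sum_ite_irrel, sum_const_zero]
  rw [sum_comm]
  simp only [sum_ite_eq, mem_univ, if_true]
  rw [sum_comm]
  simp only [sum_ite_irrel, sum_const_zero]

theorem aggregate_balance {g s d : V → ℝ} (hf : ∀ a b, f (a, b) = -f (b, a))
    (hbal : ∀ x, g x + s x + ∑ u, f (u, x) = d x) (z : W) :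
    (∑ x, if q x = z then g x + s x - d x else 0) + ∑ z', aggregate q f (z', z) = 0 := by
  rw [sum_aggregate_inflow q hf, ← sum_add_distrib]
  refine sum_eq_zero fun x _ => ?_
  split_ifs
  · linarith [hbal x]
  · simp

end Aggregation

section LeafLift

variable {V W : Type*} [DecidableEq V] (q : V → W) (v w : V) (r : ℝ) (F : W × W → ℝ)

def leafLift : V × V → ℝ := fun ab =>
  if ab.1 = v then (if ab.2 = w then r else 0)
  else if ab.2 = v then (if ab.1 = w then -r else 0)
  else F (q ab.1, q ab.2)

variable {q v w r F}

theorem leafLift_antisymm (hwv : w ≠ v) (hF : ∀ z z', F (z, z') = -F (z', z)) (a b : V) :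
    leafLift q v w r F (a, b) = -leafLift q v w r F (b, a) := by
  unfold leafLift
  dsimp only
  split_ifs <;> first | exact hF _ _ | (clear hF; simp_all)

theorem abs_leafLift_le {U : V × V → ℝ} (hUnonneg : ∀ a b, 0 ≤ U (a, b))
    (hUsymm : ∀ a b, U (a, b) = U (b, a)) (hr : |r| ≤ U (v, w))
    (hF : ∀ a b, a ≠ v → b ≠ v → |F (q a, q b)| ≤ U (a, b)) (a b : V) :
    |leafLift q v w r F (a, b)| ≤ U (a, b) := by
  unfold leafLift
  dsimp only
  split_ifs with ha hb hb haw
  · rwa [ha, hb]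
  · simpa using hUnonneg a b
  · rwa [hb, haw, abs_neg, hUsymm]
  · simpa using hUnonneg a b
  · exact hF a b ha hb

end LeafLift

section LeafMerge

variable {V : Type*} [DecidableEq V] {v w : V} {q : V → {u : V // u ≠ v}}

theorem merge_eq_iff (hq : ∀ u, (q u : V) = if u = v then w else u) (x : V)
    (z : {u : V // u ≠ v}) : q x = z ↔ x = z ∨ x = v ∧ (z : V) = w := by
  rw [Subtype.ext_iff, hq]
  have := z.2
  split_ifs with hx <;> constructor <;> aesop

variable [Fintype V] {U : V × V → ℝ}

theorem radial_flow_eq {g s d : V → ℝ} {f : V × V → ℝ} (hf : ∀ a b, f (a, b) = -f (b, a))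
    (hcap : ∀ u, u ≠ v → u ≠ w → |f (u, v)| ≤ U (u, v))
    (hleaf : ∀ u, u ≠ v → u ≠ w → U (u, v) = 0)
    (hbal : g v + s v + ∑ u, f (u, v) = d v) :
    f (w, v) = d v - g v - s v := by
  have hinflow : ∑ u, f (u, v) = f (w, v) := by
    refine Fintype.sum_eq_single w fun u huw => ?_
    by_cases huv : u = v
    · subst huv
      linarith [hf u u]
    · exact abs_nonpos_iff.mp ((hcap u huv huw).trans (hleaf u huv huw).le)
  linarith

theorem sum_fiber_merge (hq : ∀ u, (q u : V) = if u = v then w else u) (h : V → ℝ)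
    (z : {u : V // u ≠ v}) :
    ∑ x, (if q x = z then h x else 0) = h z + if (z : V) = w then h v else 0 := by
  have hsplit : ∀ x, (if q x = z then h x else 0) =
      (if x = z then h x else 0) + if (z : V) = w then (if x = v then h x else 0) else 0 := by
    intro x
    have hzv : (z : V) ≠ v := z.2
    simp only [merge_eq_iff hq]
    by_cases hx : x = v
    · subst hx
      simp [Ne.symm hzv]
    · simp [hx]
  simp only [hsplit, sum_add_distrib, sum_ite_eq', mem_univ, if_true, sum_ite_irrel,
    sum_const_zero]

theorem sum_ite_comp_merge (hq : ∀ u, (q u : V) = if u = v then w else u)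
    (h : {u : V // u ≠ v} → ℝ) :
    ∑ u, (if u = v then 0 else h (q u)) = ∑ z, h z := by
  have hqz : ∀ z : {u : V // u ≠ v}, q z = z := fun z => Subtype.ext (by simp [hq, z.2])
  calc ∑ u, (if u = v then 0 else h (q u))
      = ∑ u ∈ univ.filter (· ≠ v), h (q u) := by simp only [sum_filter, ite_not]
    _ = ∑ z : {u : V // u ≠ v}, h (q z) := sum_subtype _ (by simp) _
    _ = ∑ z, h z := by simp only [hqz]

theorem aggregate_merge (hq : ∀ u, (q u : V) = if u = v then w else u)
    (hUsymm : ∀ a b, U (a, b) = U (b, a)) (hUdiag : ∀ a, U (a, a) = 0)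
    (hleaf : ∀ u, u ≠ v → u ≠ w → U (v, u) = 0) (z z' : {u : V // u ≠ v}) :
    aggregate q U (z, z') = U (z, z') := by
  by_cases hzz : z = z'
  · simp [aggregate, hzz, hUdiag]
  have hne : (z : V) ≠ z' := fun h => hzz (Subtype.ext h)
  simp only [aggregate, if_neg hzz, ite_and, sum_ite_irrel, sum_const_zero, sum_fiber_merge hq]
  by_cases hzw : (z : V) = w <;> by_cases hz'w : (z' : V) = w
  · exact absurd (hzw.trans hz'w.symm) hne
  · simp [hzw, hz'w, hleaf z' z'.2 hz'w]
  · simp [hzw, hz'w, hUsymm z v, hleaf z z.2 hzw]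
  · simp [hzw, hz'w]

theorem sum_leafLift_inflow (hq : ∀ u, (q u : V) = if u = v then w else u) (hwv : w ≠ v)
    (r : ℝ) (F : {u : V // u ≠ v} × {u : V // u ≠ v} → ℝ) (x : V) :
    ∑ u, leafLift q v w r F (u, x) =
      if x = v then -r else (if x = w then r else 0) + ∑ z, F (z, q x) := by
  by_cases hx : x = v
  · subst hx
    have hterm : ∀ u, leafLift q x w r F (u, x) = if u = w then -r else 0 := by
      intro u
      by_cases hu : u = x <;> simp [leafLift, hu, hwv.symm]
    simp [hterm]
  · have hterm : ∀ u, leafLift q v w r F (u, x) =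
        (if u = v then (if x = w then r else 0) else 0) + if u = v then 0 else F (q u, q x) := by
      intro u
      by_cases hu : u = v <;> simp [leafLift, hu, hx]
    simp only [hterm, sum_add_distrib, sum_ite_eq', mem_univ, if_true, if_neg hx,
      sum_ite_comp_merge hq (fun z => F (z, q x))]

theorem leafLift_balance (hq : ∀ u, (q u : V) = if u = v then w else u) (hwv : w ≠ v)
    {g s d : V → ℝ} {F : {u : V // u ≠ v} × {u : V // u ≠ v} → ℝ}
    (hF : ∀ z, (∑ x, if q x = z then g x + s x - d x else 0) + ∑ z', F (z', z) = 0) (x : V) :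
    g x + s x + ∑ u, leafLift q v w (g v + s v - d v) F (u, x) = d x := by
  rw [sum_leafLift_inflow hq hwv]
  by_cases hxv : x = v
  · subst hxv
    simp
  · have hqx : (q x : V) = x := by rw [hq, if_neg hxv]
    have hbal := hF (q x)
    rw [sum_fiber_merge hq, hqx] at hbal
    rw [if_neg hxv]
    linarith

end LeafMerge

theorem leaf_bus_radial_flow_and_exact_merge_general
    {V : Type*} [Fintype V] [DecidableEq V]
    (d gbar c : V → ℝ) (p : ℝ) (U : V × V → ℝ)
    (hUsymm : ∀ a b, U (a, b) = U (b, a))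
    (hUnonneg : ∀ a b, 0 ≤ U (a, b))
    (hUdiag : ∀ a, U (a, a) = 0)
    (v w : V) (hwv : w ≠ v)
    (hleaf : ∀ u : V, u ≠ v → u ≠ w → U (v, u) = 0)
    -- the quotient map identifying `v` with `w` and fixing all other buses
    (q : V → {u : V // u ≠ v})
    (hqdef : ∀ u : V, (q u : V) = if u = v then w else u) :
    -- (i) the radial flow is determined by the injections at the leaf bus
    ((∀ (g s : V → ℝ) (f : V × V → ℝ),
        ((∀ x, 0 ≤ g x ∧ g x ≤ gbar x) ∧
         (∀ x, 0 ≤ s x ∧ s x ≤ d x) ∧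
         (∀ a b, f (a, b) = - f (b, a)) ∧
         (∀ a b, |f (a, b)| ≤ U (a, b)) ∧
         (∀ x : V, g x + s x + (∑ u : V, f (u, x)) = d x)) →
        f (w, v) = d v - g v - s v) ∧
     (max (d v) (gbar v) ≤ U (v, w) →
       -- (ii) the radial-line capacity constraint is implied by the rest
       ((∀ (g s : V → ℝ) (f : V × V → ℝ),
           ((∀ x, 0 ≤ g x ∧ g x ≤ gbar x) ∧
            (∀ x, 0 ≤ s x ∧ s x ≤ d x) ∧
            (∀ a b, f (a, b) = - f (b, a)) ∧
            (∀ a b, ¬((a = v ∧ b = w) ∨ (a = w ∧ b = v)) →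
                |f (a, b)| ≤ U (a, b)) ∧
            (∀ x : V, g x + s x + (∑ u : V, f (u, x)) = d x)) →
           |f (v, w)| ≤ U (v, w)) ∧
        -- (iii) merging `v` into `w` preserves the optimal value
        sInf { t : ℝ | ∃ (g s : V → ℝ)
              (F : {u : V // u ≠ v} × {u : V // u ≠ v} → ℝ),
            (∀ x, 0 ≤ g x ∧ g x ≤ gbar x) ∧
            (∀ x, 0 ≤ s x ∧ s x ≤ d x) ∧
            (∀ z z', F (z, z') = - F (z', z)) ∧
            (∀ z z', |F (z, z')| ≤ (if z = z' then 0 else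
                ∑ a : V, ∑ b : V, if q a = z ∧ q b = z' then U (a, b) else 0)) ∧
            (∀ z : {u : V // u ≠ v},
                (∑ x : V, if q x = z then g x + s x - d x else 0)
                + (∑ z' : {u : V // u ≠ v}, F (z', z)) = 0) ∧
            t = ∑ x : V, (c x * g x + p * s x) }
        = sInf { t : ℝ | ∃ (g s : V → ℝ) (f : V × V → ℝ),
            (∀ x, 0 ≤ g x ∧ g x ≤ gbar x) ∧
            (∀ x, 0 ≤ s x ∧ s x ≤ d x) ∧
            (∀ a b, f (a, b) = - f (b, a)) ∧
            (∀ a b, |f (a, b)| ≤ U (a, b)) ∧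
            (∀ x : V, g x + s x + (∑ u : V, f (u, x)) = d x) ∧
            t = ∑ x : V, (c x * g x + p * s x) }))) := by
  have hUleaf : ∀ u, u ≠ v → u ≠ w → U (u, v) = 0 := fun u hu huw =>
    (hUsymm u v).trans (hleaf u hu huw)
  refine ⟨fun g s f ⟨_, _, hanti, hcap, hbal⟩ =>
    radial_flow_eq hanti (fun u _ _ => hcap u v) hUleaf (hbal v), fun hmax => ⟨?_, ?_⟩⟩
  · rintro g s f ⟨hg, hs, hanti, hcap, hbal⟩
    have hvw : f (v, w) = g v + s v - d v := by
      linarith [hanti v w, radial_flow_eq hanti (fun u _ _ => hcap u v (by tauto)) hUleaf (hbal v)]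
    rw [hvw]
    exact abs_add_sub_le_of_max_le (hg v) (hs v) hmax
  congr 1
  ext t
  constructor
  · rintro ⟨g, s, F, hg, hs, hFanti, hFcap, hFbal, rfl⟩
    refine ⟨g, s, leafLift q v w (g v + s v - d v) F, hg, hs, leafLift_antisymm hwv hFanti,
      abs_leafLift_le hUnonneg hUsymm (abs_add_sub_le_of_max_le (hg v) (hs v) hmax)
        (fun a b ha hb => ?_), leafLift_balance hqdef hwv hFbal, rfl⟩
    have hab : |F (q a, q b)| ≤ aggregate q U (q a, q b) := hFcap (q a) (q b)
    rwa [aggregate_merge hqdef hUsymm hUdiag hleaf, hqdef, hqdef, if_neg ha, if_neg hb] at hab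
  · rintro ⟨g, s, f, hg, hs, hanti, hcap, hbal, rfl⟩
    exact ⟨g, s, aggregate q f, hg, hs, aggregate_antisymm q hanti, abs_aggregate_le q hcap,
      aggregate_balance q hanti hbal, rfl⟩

/-- Suppose bus `v` is a leaf of the nodal pipe-and-bubble model:
there is a bus `w ≠ v` with `U (v, u) = 0` for all `u ∉ {v, w}`. Then
(i) every feasible point satisfies `f (w, v) = d v - g v - s v` (the flow on a
radial line is determined by the injections at the leaf bus); and, moreover,
if `U (v, w) ≥ max (d v) (gbar v)`, then
(ii) the capacity constraint `|f (v, w)| ≤ U (v, w)` is implied by the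
remaining constraints, and
(iii) the aggregated model induced by the quotient map identifying `v` with
`w` (and fixing all other buses) has the same optimal value as the nodal
model. -/
theorem leaf_bus_radial_flow_and_exact_merge
    {V : Type*} [Fintype V] [DecidableEq V]
    (d gbar c : V → ℝ) (p : ℝ) (U : V × V → ℝ)
    (hd : ∀ x, 0 ≤ d x) (hgbar : ∀ x, 0 ≤ gbar x)
    (hc : ∀ x, 0 ≤ c x) (hp : 0 ≤ p)
    (hUsymm : ∀ a b, U (a, b) = U (b, a))
    (hUnonneg : ∀ a b, 0 ≤ U (a, b))
    (hUdiag : ∀ a, U (a, a) = 0)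
    (v w : V) (hwv : w ≠ v)
    (hleaf : ∀ u : V, u ≠ v → u ≠ w → U (v, u) = 0)
    -- the quotient map identifying `v` with `w` and fixing all other buses
    (q : V → {u : V // u ≠ v})
    (hqdef : ∀ u : V, (q u : V) = if u = v then w else u) :
    -- (i) the radial flow is determined by the injections at the leaf bus
    ((∀ (g s : V → ℝ) (f : V × V → ℝ),
        ((∀ x, 0 ≤ g x ∧ g x ≤ gbar x) ∧
         (∀ x, 0 ≤ s x ∧ s x ≤ d x) ∧
         (∀ a b, f (a, b) = - f (b, a)) ∧
         (∀ a b, |f (a, b)| ≤ U (a, b)) ∧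
         (∀ x : V, g x + s x + (∑ u : V, f (u, x)) = d x)) →
        f (w, v) = d v - g v - s v) ∧
     (max (d v) (gbar v) ≤ U (v, w) →
       -- (ii) the radial-line capacity constraint is implied by the rest
       ((∀ (g s : V → ℝ) (f : V × V → ℝ),
           ((∀ x, 0 ≤ g x ∧ g x ≤ gbar x) ∧
            (∀ x, 0 ≤ s x ∧ s x ≤ d x) ∧
            (∀ a b, f (a, b) = - f (b, a)) ∧
            (∀ a b, ¬((a = v ∧ b = w) ∨ (a = w ∧ b = v)) →
                |f (a, b)| ≤ U (a, b)) ∧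
            (∀ x : V, g x + s x + (∑ u : V, f (u, x)) = d x)) →
           |f (v, w)| ≤ U (v, w)) ∧
        -- (iii) merging `v` into `w` preserves the optimal value
        sInf { t : ℝ | ∃ (g s : V → ℝ)
              (F : {u : V // u ≠ v} × {u : V // u ≠ v} → ℝ),
            (∀ x, 0 ≤ g x ∧ g x ≤ gbar x) ∧
            (∀ x, 0 ≤ s x ∧ s x ≤ d x) ∧
            (∀ z z', F (z, z') = - F (z', z)) ∧
            (∀ z z', |F (z, z')| ≤ (if z = z' then 0 else
                ∑ a : V, ∑ b : V, if q a = z ∧ q b = z' then U (a, b) else 0)) ∧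
            (∀ z : {u : V // u ≠ v},
                (∑ x : V, if q x = z then g x + s x - d x else 0)
                + (∑ z' : {u : V // u ≠ v}, F (z', z)) = 0) ∧
            t = ∑ x : V, (c x * g x + p * s x) }
        = sInf { t : ℝ | ∃ (g s : V → ℝ) (f : V × V → ℝ),
            (∀ x, 0 ≤ g x ∧ g x ≤ gbar x) ∧
            (∀ x, 0 ≤ s x ∧ s x ≤ d x) ∧
            (∀ a b, f (a, b) = - f (b, a)) ∧
            (∀ a b, |f (a, b)| ≤ U (a, b)) ∧
            (∀ x : V, g x + s x + (∑ u : V, f (u, x)) = d x) ∧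
            t = ∑ x : V, (c x * g x + p * s x) }))) :=
  leaf_bus_radial_flow_and_exact_merge_general d gbar c p U hUsymm hUnonneg hUdiag v w hwv hleaf q
    hqdef
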